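/- Let Σ ⊂ ℝⁿ be a compact smooth embedded k-dimensional submanifold without boundary and let (p,q) : [0,T) → Σ × Σ be a chord shortening flow relative to Σ. Then the chord length ℓ(t) = |p(t) − q(t)| is differentiable in t and satisfies dℓ/dt = −‖η^T‖² = −(|η^T(p)|² + |η^T(q)|²) ≤ 0; in particular ℓ is a non-increasing function of t. -/

import Mathlib

open scoped RealInnerProductSpace ENNReal
open Set Filter

noncomputable section

/-- Euclidean `n`-space. -/
abbrev Euc (n : ℕ) := EuclideanSpace ℝ (Fin n)

/-- The orthogonal projection `π_K` onto a submodule `K`, as a map `Euc n → Euc n`. -/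
def projSM {n : ℕ} (K : Submodule ℝ (Euc n)) (v : Euc n) : Euc n :=
  (K.orthogonalProjection v : Euc n)

/-- `S` is a smooth embedded `k`-dimensional submanifold (without boundary) of `ℝⁿ`,
whose tangent space at each `x ∈ S` is the `k`-dimensional subspace `T x ⊆ ℝⁿ`:
every point of `S` has a neighbourhood in `S` which is the image of a smooth injective
parametrization, which is a homeomorphism onto its image, with injective differential whose
range is the assigned tangent space. -/
def IsSubmanifold (n k : ℕ) (S : Set (Euc n)) (T : Euc n → Submodule ℝ (Euc n)) : Prop :=
  ∀ x ∈ S, ∃ (f : Euc k → Euc n) (u : Set (Euc k)) (v : Set (Euc n)),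
    IsOpen u ∧ IsOpen v ∧ x ∈ v ∧ ContDiffOn ℝ (⊤ : ℕ∞) f u ∧ Set.InjOn f u ∧
    f '' u = S ∩ v ∧
    (∀ s ⊆ u, IsOpen s → ∃ w : Set (Euc n), IsOpen w ∧ f '' s = S ∩ w) ∧
    ∀ y ∈ u, Function.Injective (fderiv ℝ f y) ∧
      LinearMap.range ((fderiv ℝ f y) : Euc k →ₗ[ℝ] Euc n) = T (f y)

/-- The tangential part `η^T(x) = π_{T x}((x - y)/|x - y|)` of the outward unit conormal at `x`
of the chord from `x` to `y`. -/
def conormalT {n : ℕ} (T : Euc n → Submodule ℝ (Euc n)) (x y : Euc n) : Euc n :=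
  projSM (T x) (‖x - y‖⁻¹ • (x - y))

/-- A chord shortening flow relative to `S` (with tangent spaces `T`) on the time domain `dom`:
a pair of C¹ curves `p q : dom → S` with `p t ≠ q t`, satisfying
`p' = -π_{p}((p-q)/|p-q|)` and `q' = -π_{q}((q-p)/|q-p|)`. -/
def IsCSFOn {n : ℕ} (S : Set (Euc n)) (T : Euc n → Submodule ℝ (Euc n))
    (dom : Set ℝ) (p q : ℝ → Euc n) : Prop :=
  ∀ t ∈ dom, p t ∈ S ∧ q t ∈ S ∧ p t ≠ q t ∧
    HasDerivWithinAt p (-(conormalT T (p t) (q t))) dom t ∧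
    HasDerivWithinAt q (-(conormalT T (q t) (p t))) dom t

/-- The time interval `[0, Tm)` (where possibly `Tm = ∞`). -/
def csfDomain (Tm : ℝ≥0∞) : Set ℝ := {t : ℝ | 0 ≤ t ∧ ENNReal.ofReal t < Tm}

/-- A maximal chord shortening flow: one defined on `[0, Tm)` which cannot be extended to a
chord shortening flow on a strictly larger interval `[0, Tm')`. -/
def IsMaximalCSF {n : ℕ} (S : Set (Euc n)) (T : Euc n → Submodule ℝ (Euc n))
    (Tm : ℝ≥0∞) (p q : ℝ → Euc n) : Prop :=
  IsCSFOn S T (csfDomain Tm) p q ∧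
  ∀ Tm' : ℝ≥0∞, Tm < Tm' → ∀ p' q' : ℝ → Euc n,
    IsCSFOn S T (csfDomain Tm') p' q' →
    ¬ (∀ t ∈ csfDomain Tm, p' t = p t ∧ q' t = q t)

/-! The chord length `ℓ = |p - q|` has derivative `⟪η(p), p' - q'⟫`. Since `η(q) = -η(p)` and an
orthogonal projection `π` satisfies `⟪v, π v⟫ = |π v|²`, this equals
`-⟪η(p), π_p η(p)⟫ - ⟪η(q), π_q η(q)⟫ = -(|η^T(p)|² + |η^T(q)|²)`. A non-positive derivative on an
interval makes `ℓ` non-increasing by the mean value theorem. -/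

theorem HasDerivWithinAt.norm {F : Type*} [NormedAddCommGroup F] [InnerProductSpace ℝ F]
    {f : ℝ → F} {f' : F} {s : Set ℝ} {x : ℝ} (hf : HasDerivWithinAt f f' s x) (h0 : f x ≠ 0) :
    HasDerivWithinAt (‖f ·‖) ⟪‖f x‖⁻¹ • f x, f'⟫ s x := by
  have h := hf.norm_sq.sqrt (by positivity)
  simp only [Real.sqrt_sq (norm_nonneg _)] at h
  convert h using 1
  rw [real_inner_smul_left]
  field_simp

theorem inner_projSM_self {n : ℕ} (K : Submodule ℝ (Euc n)) (v : Euc n) :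
    ⟪v, projSM K v⟫ = ‖projSM K v‖ ^ 2 := by
  have hidem : projSM K (projSM K v) = projSM K v :=
    K.starProjection_eq_self_iff.mpr (K.starProjection_apply_mem v)
  calc ⟪v, projSM K v⟫ = ⟪v, projSM K (projSM K v)⟫ := by rw [hidem]
    _ = ⟪projSM K v, projSM K v⟫ := (K.inner_starProjection_left_eq_right v (projSM K v)).symm
    _ = ‖projSM K v‖ ^ 2 := real_inner_self_eq_norm_sq _

theorem conormalT_swap {n : ℕ} (T : Euc n → Submodule ℝ (Euc n)) (x y : Euc n) :
    conormalT T y x = -projSM (T y) (‖x - y‖⁻¹ • (x - y)) := by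
  simp only [conormalT, projSM, ← neg_sub x y, norm_neg, smul_neg, map_neg, Submodule.coe_neg]

theorem inner_chord_conormalT_sub {n : ℕ} (T : Euc n → Submodule ℝ (Euc n)) (x y : Euc n) :
    ⟪‖x - y‖⁻¹ • (x - y), -conormalT T x y - -conormalT T y x⟫ =
      -(‖conormalT T x y‖ ^ 2 + ‖conormalT T y x‖ ^ 2) := by
  rw [conormalT_swap T x y, conormalT, norm_neg, inner_sub_right, inner_neg_right, inner_neg_right,
    inner_neg_right, inner_projSM_self, inner_projSM_self]
  ring

namespace IsCSFOn

variable {n : ℕ} {S : Set (Euc n)} {T : Euc n → Submodule ℝ (Euc n)} {dom : Set ℝ}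
  {p q : ℝ → Euc n}

theorem hasDerivWithinAt_chord_length (hflow : IsCSFOn S T dom p q) {t : ℝ} (ht : t ∈ dom) :
    HasDerivWithinAt (fun s => ‖p s - q s‖)
      (-(‖conormalT T (p t) (q t)‖ ^ 2 + ‖conormalT T (q t) (p t)‖ ^ 2)) dom t := by
  obtain ⟨-, -, hne, hp, hq⟩ := hflow t ht
  rw [← inner_chord_conormalT_sub]
  exact (hp.sub hq).norm (sub_ne_zero.mpr hne)

theorem antitoneOn_chord_length (hflow : IsCSFOn S T dom p q) (hdom : Convex ℝ dom) :
    AntitoneOn (fun s => ‖p s - q s‖) dom :=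
  antitoneOn_of_hasDerivWithinAt_nonpos hdom
    (fun _ ht => (hflow.hasDerivWithinAt_chord_length ht).continuousWithinAt)
    (fun _ ht => (hflow.hasDerivWithinAt_chord_length (interior_subset ht)).mono interior_subset)
    (fun _ _ => neg_nonpos.mpr (by positivity))

end IsCSFOn

theorem convex_csfDomain (Tm : ℝ≥0∞) : Convex ℝ (csfDomain Tm) :=
  convex_iff_ordConnected.mpr ⟨fun _ hx _ hy _ hz =>
    ⟨hx.1.trans hz.1, (ENNReal.ofReal_le_ofReal hz.2).trans_lt hy.2⟩⟩

theorem chord_statement_4_general (n : ℕ) (S : Set (Euc n)) (T : Euc n → Submodule ℝ (Euc n))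
    (Tm : ℝ≥0∞) (p q : ℝ → Euc n) (hflow : IsCSFOn S T (csfDomain Tm) p q) :
    (∀ t ∈ csfDomain Tm,
      HasDerivWithinAt (fun s => ‖p s - q s‖)
        (-(‖conormalT T (p t) (q t)‖ ^ 2 + ‖conormalT T (q t) (p t)‖ ^ 2))
        (csfDomain Tm) t ∧
      -(‖conormalT T (p t) (q t)‖ ^ 2 + ‖conormalT T (q t) (p t)‖ ^ 2) ≤ 0) ∧
    ∀ s ∈ csfDomain Tm, ∀ t ∈ csfDomain Tm, s ≤ t → ‖p t - q t‖ ≤ ‖p s - q s‖ :=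
  ⟨fun _ ht => ⟨hflow.hasDerivWithinAt_chord_length ht, neg_nonpos.mpr (by positivity)⟩,
    fun _ hs _ ht hst => hflow.antitoneOn_chord_length (convex_csfDomain Tm) hs ht hst⟩

/-- **Evolution of chord length.** Under the chord shortening flow, the chord length
`ℓ(t) = |p(t) - q(t)|` satisfies `dℓ/dt = -‖η^T‖² ≤ 0`; in particular `ℓ` is non-increasing. -/
theorem chord_statement_4 (n k : ℕ) (S : Set (Euc n)) (T : Euc n → Submodule ℝ (Euc n))
    (hsub : IsSubmanifold n k S T) (hcpt : IsCompact S)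
    (Tm : ℝ≥0∞) (p q : ℝ → Euc n) (hflow : IsCSFOn S T (csfDomain Tm) p q) :
    (∀ t ∈ csfDomain Tm,
      HasDerivWithinAt (fun s => ‖p s - q s‖)
        (-(‖conormalT T (p t) (q t)‖ ^ 2 + ‖conormalT T (q t) (p t)‖ ^ 2))
        (csfDomain Tm) t ∧
      -(‖conormalT T (p t) (q t)‖ ^ 2 + ‖conormalT T (q t) (p t)‖ ^ 2) ≤ 0) ∧
    ∀ s ∈ csfDomain Tm, ∀ t ∈ csfDomain Tm, s ≤ t → ‖p t - q t‖ ≤ ‖p s - q s‖ :=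
  chord_statement_4_general n S T Tm p q hflow

end
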